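/- arXiv:1611.02651 — 2 statements merged into one kernel-verified Lean document; each statement's English description precedes it below -/
import Mathlib

section
/- Let f(x) = Q(x) + Bx + c be a quadratic vector field on ℝⁿ and let Φ(x,ε) denote the Kahan map x̃ = x + 2ε(I - εf'(x))^{-1} f(x). Then Φ is reversible: Φ(Φ(x,ε), -ε) = x, whenever the relevant matrices I - εf'(x) and I + εf'(Φ(x,ε)) are invertible. -/
/-- The Jacobian matrix `f'(x)` of a map `f : ℝⁿ → ℝⁿ` in standard coordinates. -/
noncomputable def jacobian {n : ℕ} (f : (Fin n → ℝ) → (Fin n → ℝ)) (x : Fin n → ℝ) :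
    Matrix (Fin n) (Fin n) ℝ :=
  Matrix.of fun i j => fderiv ℝ f x (Pi.single j 1) i

/-- The Kahan map `Φ(x,ε) = x + 2ε (I - ε f'(x))⁻¹ f(x)`. -/
noncomputable def kahanMap {n : ℕ} (f : (Fin n → ℝ) → (Fin n → ℝ)) (x : Fin n → ℝ)
    (ε : ℝ) : Fin n → ℝ :=
  x + (2 * ε) • (1 - ε • jacobian f x)⁻¹.mulVec (f x)

/-! For a quadratic field `f` the trapezoidal rule is exact on derivatives:
`f'(a)(a - b) + f'(b)(a - b) = 2 (f a - f b)`. The Kahan step `x ↦ x̃` is the solution of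
`(I - ε f'(x))(x̃ - x) = 2ε f(x)`; subtracting `ε` times the identity with `a = x̃`, `b = x` turns it
into `(I + ε f'(x̃))(x - x̃) = -2ε f(x̃)`, which says that `x` is the step from `x̃` with `-ε`. -/

open Matrix

section Quadratic

variable {𝕜 E F : Type*} [NontriviallyNormedField 𝕜] [NormedAddCommGroup E] [NormedSpace 𝕜 E]
  [NormedAddCommGroup F] [NormedSpace 𝕜 F]

theorem fderiv_bilinear_diag_add_affine_apply (β : E →L[𝕜] E →L[𝕜] F) (L : E →L[𝕜] F) (c : F)
    (a v : E) : fderiv 𝕜 (fun y => β y y + L y + c) a v = β a v + β v a + L v := by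
  have hq : HasFDerivAt (fun y => β y y + L y + c)
      (β.precompR E a (.id 𝕜 E) + β.precompL E (.id 𝕜 E) a + L) a :=
    ((β.hasFDerivAt_of_bilinear (hasFDerivAt_id a) (hasFDerivAt_id a)).add
      L.hasFDerivAt).add_const c
  rw [hq.fderiv]
  simp

theorem fderiv_apply_sub_add_fderiv_apply_sub_bilinear_diag (β : E →L[𝕜] E →L[𝕜] F)
    (L : E →L[𝕜] F) (c : F) (a b : E) :
    fderiv 𝕜 (fun y => β y y + L y + c) a (a - b) + fderiv 𝕜 (fun y => β y y + L y + c) b (a - b)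
      = (2 : 𝕜) • ((β a a + L a + c) - (β b b + L b + c)) := by
  simp only [fderiv_bilinear_diag_add_affine_apply, map_sub]
  module

end Quadratic

noncomputable def Matrix.dotProductMulVecCLM {ι m : Type*} [Fintype m] (A : ι → Matrix m m ℝ) :
    (m → ℝ) →L[ℝ] (m → ℝ) →L[ℝ] (ι → ℝ) :=
  LinearMap.toContinuousLinearMap <| LinearMap.toContinuousLinearMap.toLinearMap ∘ₗ
    LinearMap.mk₂ ℝ (fun x y i => x ⬝ᵥ A i *ᵥ y)
      (fun x x' y => by funext i; simp [add_dotProduct])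
      (fun r x y => by funext i; simp [smul_dotProduct])
      (fun x y y' => by funext i; simp [mulVec_add, dotProduct_add])
      (fun r x y => by funext i; simp [mulVec_smul, dotProduct_smul])

section Kahan

variable {n : ℕ} {f : (Fin n → ℝ) → Fin n → ℝ} {x y : Fin n → ℝ} {ε : ℝ}

theorem jacobian_mulVec (f : (Fin n → ℝ) → Fin n → ℝ) (x v : Fin n → ℝ) :
    jacobian f x *ᵥ v = fderiv ℝ f x v := by
  have : jacobian f x = LinearMap.toMatrix' (fderiv ℝ f x : (Fin n → ℝ) →ₗ[ℝ] Fin n → ℝ) := by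
    ext i j
    simp [jacobian, LinearMap.toMatrix'_apply]
  rw [this, LinearMap.toMatrix'_mulVec]
  rfl

theorem kahanMap_eq_iff (h : IsUnit (1 - ε • jacobian f x)) :
    kahanMap f x ε = y ↔ (1 - ε • jacobian f x) *ᵥ (y - x) = (2 * ε) • f x := by
  have := h.invertible
  rw [kahanMap, ← eq_sub_iff_add_eq', ← mulVec_smul]
  exact ⟨fun h' => by rw [← h', mulVec_mulVec, mul_inv_of_invertible, one_mulVec],
    fun h' => inv_mulVec_eq_vec h'.symm⟩

theorem kahanMap_kahanMap_neg
    (hpolar : ∀ a b, fderiv ℝ f a (a - b) + fderiv ℝ f b (a - b) = (2 : ℝ) • (f a - f b))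
    (h₁ : IsUnit (1 - ε • jacobian f x)) (h₂ : IsUnit (1 + ε • jacobian f (kahanMap f x ε))) :
    kahanMap f (kahanMap f x ε) (-ε) = x := by
  set x' := kahanMap f x ε
  have hx' := (kahanMap_eq_iff h₁).1 rfl
  rw [kahanMap_eq_iff (by rwa [neg_smul, sub_neg_eq_add])]
  have hD : fderiv ℝ f x' (x - x') = -fderiv ℝ f x' (x' - x) := by
    rw [← map_neg, neg_sub]
  simp only [sub_mulVec, one_mulVec, smul_mulVec, jacobian_mulVec] at hx' ⊢
  rw [hD]
  linear_combination (norm := module) -hx' - ε • hpolar x' x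

end Kahan

/-- reversibility of the Kahan map: for a quadratic vector field
`f(x) = Q(x) + Bx + c`, the Kahan map satisfies `Φ(Φ(x,ε), -ε) = x` whenever
`I - ε f'(x)` and `I + ε f'(Φ(x,ε))` are invertible. -/
theorem kahan_reversible {n : ℕ}
    (Q : (Fin n → ℝ) → (Fin n → ℝ)) (B : Matrix (Fin n) (Fin n) ℝ) (c : Fin n → ℝ)
    (hQ : ∃ A : Fin n → Matrix (Fin n) (Fin n) ℝ,
      ∀ x i, Q x i = dotProduct x ((A i).mulVec x))
    (f : (Fin n → ℝ) → (Fin n → ℝ)) (hf : ∀ x, f x = Q x + B.mulVec x + c)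
    (ε : ℝ) (x : Fin n → ℝ)
    (hinv₁ : IsUnit (1 - ε • jacobian f x))
    (hinv₂ : IsUnit (1 + ε • jacobian f (kahanMap f x ε))) :
    kahanMap f (kahanMap f x ε) (-ε) = x := by
  obtain ⟨A, hA⟩ := hQ
  let β := dotProductMulVecCLM A
  let L := LinearMap.toContinuousLinearMap (mulVecLin B)
  obtain rfl : f = fun y => β y y + L y + c := by
    funext y
    rw [hf, show Q y = β y y from funext (hA y)]
    rfl
  exact kahanMap_kahanMap_neg (fderiv_apply_sub_add_fderiv_apply_sub_bilinear_diag β L c)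
    hinv₁ hinv₂
end

section
/- Let H : ℝⁿ → ℝ be smooth, J skew-symmetric, f = J∇H, and let u, v be rooted trees whose underlying (unrooted) graphs are isomorphic, differing only in the position of the root. Then H(u)(x) = (-1)^{κ(u,v)} H(v)(x), where κ(u,v) is the number of one-step root changes (moving the root along a single edge) needed to transform v into u. -/
/-- Rooted (ordered representatives of) trees: `node [τ₁,…,τ_m]` grafts the roots of
`τ₁,…,τ_m` by new edges to a new root. `node []` is the one-vertex tree `•`. -/
inductive RTree where
  | node : List RTree → RTree

/-- The elementary differential: `F(•)(x) = f(x)` and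
`F([τ₁,…,τ_m])(x) = f⁽ᵐ⁾(x)(F(τ₁)(x),…,F(τ_m)(x))`. -/
noncomputable def elemDiff {n : ℕ} (f : (Fin n → ℝ) → (Fin n → ℝ)) :
    RTree → (Fin n → ℝ) → (Fin n → ℝ)
  | .node l, x => iteratedFDeriv ℝ l.length f x (fun i => elemDiff f (l.get i) x)
termination_by t => sizeOf t
decreasing_by
  simp only [RTree.node.sizeOf_spec]
  calc sizeOf (l.get i) < sizeOf l := List.sizeOf_get l i
    _ < 1 + sizeOf l := by omega

/-- The elementary Hamiltonian: `H(•)(x) = H(x)` and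
`H([τ₁,…,τ_m])(x) = H⁽ᵐ⁾(x)(F(τ₁)(x),…,F(τ_m)(x))`. -/
noncomputable def elemHam {n : ℕ} (H : (Fin n → ℝ) → ℝ) (f : (Fin n → ℝ) → (Fin n → ℝ)) :
    RTree → (Fin n → ℝ) → ℝ
  | .node l, x => iteratedFDeriv ℝ l.length H x (fun i => elemDiff f (l.get i) x)

/-- The Butcher product `u ∘ v = [u₁,…,u_m,v]` for `u = [u₁,…,u_m]`. -/
def butcher : RTree → RTree → RTree
  | .node l, v => .node (l ++ [v])

/-- The gradient of `H` in the standard coordinates of `ℝⁿ`. -/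
noncomputable def grad {n : ℕ} (H : (Fin n → ℝ) → ℝ) (x : Fin n → ℝ) : Fin n → ℝ :=
  fun i => fderiv ℝ H x (Pi.single i 1)

/-- Proper isomorphism of rooted trees (equality in the set `T` of unordered rooted
trees): the lists of children agree up to permutation and proper isomorphism. -/
inductive TEq : RTree → RTree → Prop where
  | nil : TEq (.node []) (.node [])
  | cons {a b : RTree} {l₁ l₂ : List RTree} :
      TEq a b → TEq (.node l₁) (.node l₂) → TEq (.node (a :: l₁)) (.node (b :: l₂))
  | swap (a b : RTree) (l : List RTree) :
      TEq (.node (a :: b :: l)) (.node (b :: a :: l))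
  | trans {t₁ t₂ t₃ : RTree} : TEq t₁ t₂ → TEq t₂ t₃ → TEq t₁ t₃

/-- A one-step root change: `v` is obtained from `u` by moving the root along a single
edge; equivalently `u = a ∘ b` and `v = b ∘ a` (as unordered rooted trees) for some
rooted trees `a`, `b`. -/
def RootStep (u v : RTree) : Prop :=
  ∃ a b : RTree, TEq u (butcher a b) ∧ TEq v (butcher b a)


open Function

section Sym
variable {E : Type} [NormedAddCommGroup E] [NormedSpace ℝ E]

def restrictLast {m : ℕ} (σ : Equiv.Perm (Fin (m + 1))) (hσ : σ (Fin.last m) = Fin.last m) :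
    Equiv.Perm (Fin m) where
  toFun i := Fin.castPred (σ i.castSucc) (by
    intro h
    have : i.castSucc = Fin.last m := σ.injective (by rw [h, hσ])
    exact absurd this (Fin.castSucc_lt_last i).ne)
  invFun i := Fin.castPred (σ⁻¹ i.castSucc) (by
    intro h
    have hσ' : σ⁻¹ (Fin.last m) = Fin.last m := by
      conv_lhs => rw [← hσ]
      simp
    have : i.castSucc = Fin.last m := σ⁻¹.injective (by rw [h, hσ'])
    exact absurd this (Fin.castSucc_lt_last i).ne)
  left_inv i := by simp
  right_inv i := by simp

lemma restrictLast_castSucc {m : ℕ} (σ : Equiv.Perm (Fin (m + 1)))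
    (hσ : σ (Fin.last m) = Fin.last m) (i : Fin m) :
    (restrictLast σ hσ i).castSucc = σ i.castSucc := by
  simp [restrictLast]

theorem iteratedFDeriv_perm_invariant :
    ∀ (m : ℕ) {F : Type} [NormedAddCommGroup F] [NormedSpace ℝ F]
      (f : E → F), ContDiff ℝ (⊤ : ℕ∞) f → ∀ (x : E) (σ : Equiv.Perm (Fin m)) (v : Fin m → E),
      iteratedFDeriv ℝ m f x (fun i => v (σ i)) = iteratedFDeriv ℝ m f x v := by
  intro m
  induction m with
  | zero =>
    intro F _ _ f hf x σ v
    congr 1; funext i; exact i.elim0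
  | succ m IH =>
    intro F _ _ f hf x σ v
    -- invariance under permutations fixing the last index
    have hA : ∀ {F : Type} [NormedAddCommGroup F] [NormedSpace ℝ F]
        (f : E → F), ContDiff ℝ (⊤ : ℕ∞) f → ∀ (x : E) (σ : Equiv.Perm (Fin (m + 1))),
        σ (Fin.last m) = Fin.last m → ∀ (v : Fin (m + 1) → E),
        iteratedFDeriv ℝ (m + 1) f x (fun i => v (σ i)) = iteratedFDeriv ℝ (m + 1) f x v := by
      intro F _ _ f hf x σ hσ v
      rw [iteratedFDeriv_succ_apply_right, iteratedFDeriv_succ_apply_right]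
      have h1 : Fin.init (fun i => v (σ i)) =
          fun i => (Fin.init v) (restrictLast σ hσ i) := by
        funext i
        simp [Fin.init, restrictLast_castSucc]
      rw [h1, hσ, IH (fun y => fderiv ℝ f y) (hf.fderiv_right (by simp)) x
        (restrictLast σ hσ) (Fin.init v)]
    cases m with
    | zero =>
      congr 1; funext i
      have : σ i = i := Fin.ext (by omega)
      rw [this]
    | succ k =>
      have hsnd : ∀ (y p q : E),
          fderiv ℝ (fderiv ℝ f) y p q = fderiv ℝ (fderiv ℝ f) y q p := by
        intro y p q
        exact (hf.contDiffAt.isSymmSndFDerivAt (by simp; exact WithTop.coe_le_coe.2 le_top)).eq p q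
      have hf2 : ContDiff ℝ (⊤ : ℕ∞) (fderiv ℝ (fderiv ℝ f)) :=
        (hf.fderiv_right (m := (⊤ : ℕ∞)) (by exact_mod_cast le_top)).fderiv_right (m := (⊤ : ℕ∞)) (by exact_mod_cast le_top)
      -- symmetry of iterated derivative of the second derivative in the two applied slots
      have key : ∀ (u : Fin k → E) (p q : E),
          iteratedFDeriv ℝ k (fderiv ℝ (fderiv ℝ f)) x u p q =
          iteratedFDeriv ℝ k (fderiv ℝ (fderiv ℝ f)) x u q p := by
        intro u p q
        set A : E → E → ((E →L[ℝ] E →L[ℝ] F) →L[ℝ] F) := fun p q =>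
          (ContinuousLinearMap.apply ℝ F q).comp
            (ContinuousLinearMap.apply ℝ (E →L[ℝ] F) p) with hAdef
        have h1 : (A p q) ∘ (fderiv ℝ (fderiv ℝ f)) = (A q p) ∘ (fderiv ℝ (fderiv ℝ f)) := by
          funext y
          simp [hAdef, hsnd y p q]
        have h2 := (A p q).iteratedFDeriv_comp_left hf2.contDiffAt (x := x) ((by exact_mod_cast le_top) : (k : WithTop ℕ∞) ≤ ((⊤ : ℕ∞) : WithTop ℕ∞))
        have h3 := (A q p).iteratedFDeriv_comp_left hf2.contDiffAt (x := x) ((by exact_mod_cast le_top) : (k : WithTop ℕ∞) ≤ ((⊤ : ℕ∞) : WithTop ℕ∞))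
        have e2 : iteratedFDeriv ℝ k ((A p q) ∘ fderiv ℝ (fderiv ℝ f)) x u =
            iteratedFDeriv ℝ k ((A q p) ∘ fderiv ℝ (fderiv ℝ f)) x u := by rw [h1]
        rw [h2, h3] at e2
        simp only [ContinuousLinearMap.compContinuousMultilinearMap_coe, Function.comp_apply] at e2
        simpa [hAdef] using e2
      -- invariance under swapping the last two indices
      set a : Fin (k + 2) := Fin.castSucc (Fin.last k) with ha
      set b : Fin (k + 2) := Fin.last (k + 1) with hb
      have hab : a ≠ b := (Fin.castSucc_lt_last (Fin.last k)).ne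
      have expand : ∀ (u : Fin (k + 2) → E), iteratedFDeriv ℝ (k + 2) f x u =
          iteratedFDeriv ℝ k (fderiv ℝ (fderiv ℝ f)) x
            (fun i => u i.castSucc.castSucc) (u a) (u b) := by
        intro u
        rw [iteratedFDeriv_succ_apply_right, iteratedFDeriv_succ_apply_right]
        have h1 : Fin.init (Fin.init u) = fun i : Fin k => u i.castSucc.castSucc := by
          funext i; rfl
        rw [h1]
        rfl
      obtain ⟨sw, hsw⟩ : ∃ sw : Equiv.Perm (Fin (k + 2)), sw = Equiv.swap a b := ⟨_, rfl⟩
      have hB : ∀ (w : Fin (k + 2) → E),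
          iteratedFDeriv ℝ (k + 2) f x (fun i => w (sw i)) =
          iteratedFDeriv ℝ (k + 2) f x w := by
        intro w
        rw [expand, expand]
        have e1 : (fun i : Fin k => w (sw i.castSucc.castSucc)) =
            fun i : Fin k => w i.castSucc.castSucc := by
          funext i
          rw [hsw, Equiv.swap_apply_of_ne_of_ne]
          · exact (Fin.castSucc_lt_castSucc_iff.mpr (Fin.castSucc_lt_last i)).ne
          · exact (Fin.castSucc_lt_last i.castSucc).ne
        rw [show (fun i : Fin k => (fun j => w (sw j)) i.castSucc.castSucc) =
            fun i : Fin k => w i.castSucc.castSucc from e1]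
        simp only [hsw, Equiv.swap_apply_left, Equiv.swap_apply_right]
        exact (key _ _ _).symm
      by_cases hfix : σ b = b
      · exact hA f hf x σ hfix v
      · set α : Equiv.Perm (Fin (k + 2)) := Equiv.swap a (σ b) with hα
        have hαb : α b = b :=
          Equiv.swap_apply_of_ne_of_ne (Ne.symm hab) (Ne.symm hfix)
        obtain ⟨β, hβ⟩ : ∃ β : Equiv.Perm (Fin (k + 2)), β = sw⁻¹ * (α⁻¹ * σ) := ⟨_, rfl⟩
        have hβb : β b = b := by
          have hrfl : β b = sw⁻¹ (α⁻¹ (σ b)) := by rw [hβ]; rfl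
          rw [hrfl, hα, hsw, Equiv.swap_inv, Equiv.swap_inv, Equiv.swap_apply_right,
            Equiv.swap_apply_left]
        have hdecomp : ∀ i, σ i = α (sw (β i)) := by
          intro i
          have hgr : α * (sw * β) = σ := by
            rw [hβ, mul_inv_cancel_left, mul_inv_cancel_left]
          conv_lhs => rw [← hgr]
          rfl
        have st1 : iteratedFDeriv ℝ (k + 2) f x (fun i => v (σ i)) =
            iteratedFDeriv ℝ (k + 2) f x (fun i => v (α (sw (β i)))) := by
          congr 1
          funext i
          rw [hdecomp i]
        have st2 : iteratedFDeriv ℝ (k + 2) f x (fun i => v (α (sw (β i)))) =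
            iteratedFDeriv ℝ (k + 2) f x (fun i => v (α (sw i))) :=
          hA f hf x β hβb (fun j => v (α (sw j)))
        have st3 : iteratedFDeriv ℝ (k + 2) f x (fun i => v (α (sw i))) =
            iteratedFDeriv ℝ (k + 2) f x (fun i => v (α i)) := hB (fun j => v (α j))
        have st4 := hA f hf x α hαb v
        exact st1.trans (st2.trans (st3.trans st4))

end Sym


lemma elemDiff_node {n : ℕ} (f : (Fin n → ℝ) → (Fin n → ℝ)) (l : List RTree) (x : Fin n → ℝ) :
    elemDiff f (.node l) x = iteratedFDeriv ℝ l.length f x (fun i => elemDiff f (l.get i) x) := by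
  rw [elemDiff]

lemma elemHam_node {n : ℕ} (H : (Fin n → ℝ) → ℝ) (f : (Fin n → ℝ) → (Fin n → ℝ))
    (l : List RTree) (x : Fin n → ℝ) :
    elemHam H f (.node l) x = iteratedFDeriv ℝ l.length H x (fun i => elemDiff f (l.get i) x) :=
  rfl

lemma itfd_cast {E F : Type} [NormedAddCommGroup E] [NormedSpace ℝ E]
    [NormedAddCommGroup F] [NormedSpace ℝ F] {k k' : ℕ} (h : k = k') (f : E → F) (x : E)
    (v : Fin k' → E) :
    iteratedFDeriv ℝ k' f x v = iteratedFDeriv ℝ k f x (fun i => v (Fin.cast h i)) := by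
  subst h; rfl

lemma grad_contDiff {n : ℕ} {H : (Fin n → ℝ) → ℝ} (hH : ContDiff ℝ (⊤ : ℕ∞) H) :
    ContDiff ℝ (⊤ : ℕ∞) (grad H) := by
  apply contDiff_pi.2
  intro i
  exact (ContinuousLinearMap.apply ℝ ℝ (Pi.single i (1 : ℝ))).contDiff.comp
    (hH.fderiv_right (m := (⊤ : ℕ∞)) (by exact_mod_cast le_top))

def ChildRel {n : ℕ} (f : (Fin n → ℝ) → (Fin n → ℝ)) : RTree → RTree → Prop
  | .node l₁, .node l₂ => ∃ e : Fin l₁.length ≃ Fin l₂.length,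
      ∀ (i : Fin l₁.length) (x : Fin n → ℝ),
        elemDiff f (l₁.get i) x = elemDiff f (l₂.get (e i)) x

lemma childRel_aux {n : ℕ} {G : Type} [NormedAddCommGroup G] [NormedSpace ℝ G]
    {g : (Fin n → ℝ) → G} (hg : ContDiff ℝ (⊤ : ℕ∞) g) {f : (Fin n → ℝ) → (Fin n → ℝ)}
    {l₁ l₂ : List RTree}
    (e : Fin l₁.length ≃ Fin l₂.length)
    (he : ∀ (i : Fin l₁.length) (x : Fin n → ℝ),
      elemDiff f (l₁.get i) x = elemDiff f (l₂.get (e i)) x) (x : Fin n → ℝ) :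
    iteratedFDeriv ℝ l₁.length g x (fun i => elemDiff f (l₁.get i) x) =
    iteratedFDeriv ℝ l₂.length g x (fun i => elemDiff f (l₂.get i) x) := by
  have hlen : l₁.length = l₂.length := by
    simpa using Fintype.card_congr e
  rw [itfd_cast hlen g x (fun i => elemDiff f (l₂.get i) x)]
  have hperm := iteratedFDeriv_perm_invariant l₁.length g hg x
    (e.trans (finCongr hlen.symm)) (fun i => elemDiff f (l₂.get (Fin.cast hlen i)) x)
  have h2 : (fun i => elemDiff f (l₁.get i) x) =
      fun i => (fun j => elemDiff f (l₂.get (Fin.cast hlen j)) x)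
        ((e.trans (finCongr hlen.symm)) i) := by
    funext i
    have hσ : Fin.cast hlen ((e.trans (finCongr hlen.symm)) i) = e i := by
      simp
    simp only [he i x]
    rw [← hσ]
  rw [h2]
  exact hperm

lemma childRel_elemDiff {n : ℕ} {f : (Fin n → ℝ) → (Fin n → ℝ)} (hfC : ContDiff ℝ (⊤ : ℕ∞) f)
    {t₁ t₂ : RTree} (h : ChildRel f t₁ t₂) (x : Fin n → ℝ) :
    elemDiff f t₁ x = elemDiff f t₂ x := by
  obtain ⟨l₁⟩ := t₁
  obtain ⟨l₂⟩ := t₂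
  obtain ⟨e, he⟩ := h
  rw [elemDiff_node, elemDiff_node]
  exact childRel_aux hfC e he x

lemma childRel_elemHam {n : ℕ} {H : (Fin n → ℝ) → ℝ} (hH : ContDiff ℝ (⊤ : ℕ∞) H)
    {f : (Fin n → ℝ) → (Fin n → ℝ)}
    {t₁ t₂ : RTree} (h : ChildRel f t₁ t₂) (x : Fin n → ℝ) :
    elemHam H f t₁ x = elemHam H f t₂ x := by
  obtain ⟨l₁⟩ := t₁
  obtain ⟨l₂⟩ := t₂
  obtain ⟨e, he⟩ := h
  rw [elemHam_node, elemHam_node]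
  exact childRel_aux hH e he x


def swap01 (m : ℕ) : Equiv.Perm (Fin (m + 2)) where
  toFun i := if i.val = 0 then ⟨1, by omega⟩ else if i.val = 1 then ⟨0, by omega⟩ else i
  invFun i := if i.val = 0 then ⟨1, by omega⟩ else if i.val = 1 then ⟨0, by omega⟩ else i
  left_inv i := by
    obtain ⟨iv, hi⟩ := i
    match iv, hi with
    | 0, hi => rfl
    | 1, hi => rfl
    | (k + 2), hi => rfl
  right_inv i := by
    obtain ⟨iv, hi⟩ := i
    match iv, hi with
    | 0, hi => rfl
    | 1, hi => rfl
    | (k + 2), hi => rfl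

lemma teq_childRel {n : ℕ} {f : (Fin n → ℝ) → (Fin n → ℝ)} (hfC : ContDiff ℝ (⊤ : ℕ∞) f)
    {t₁ t₂ : RTree} (h : TEq t₁ t₂) : ChildRel f t₁ t₂ := by
  induction h with
  | nil => exact ⟨Equiv.refl _, fun i => i.elim0⟩
  | @cons a b l₁ l₂ h1 h2 ih1 ih2 =>
    have hab : ∀ x, elemDiff f a x = elemDiff f b x := childRel_elemDiff hfC ih1
    obtain ⟨e, he⟩ := ih2
    refine ⟨(finSuccEquiv l₁.length).trans ((Equiv.optionCongr e).trans
      (finSuccEquiv l₂.length).symm), ?_⟩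
    intro i x
    refine Fin.cases ?_ ?_ i
    · simp only [Equiv.trans_apply, finSuccEquiv_zero, Equiv.optionCongr_apply,
        Option.map_none, finSuccEquiv_symm_none]
      simpa using hab x
    · intro j
      simp only [Equiv.trans_apply, finSuccEquiv_succ, Equiv.optionCongr_apply,
        Option.map_some, finSuccEquiv_symm_some]
      simpa using he j x
  | swap a b l =>
    refine ⟨swap01 l.length, ?_⟩
    intro i x
    obtain ⟨iv, hi⟩ := i
    match iv, hi with
    | 0, hi => rfl
    | 1, hi => rfl
    | (k + 2), hi => rfl
  | @trans t₁ t₂ t₃ h1 h2 ih1 ih2 =>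
    obtain ⟨l₁⟩ := t₁
    obtain ⟨l₂⟩ := t₂
    obtain ⟨l₃⟩ := t₃
    obtain ⟨e₁, he₁⟩ := ih1
    obtain ⟨e₂, he₂⟩ := ih2
    exact ⟨e₁.trans e₂, fun i x => (he₁ i x).trans (he₂ (e₁ i) x)⟩

noncomputable def gvec {n : ℕ} (H : (Fin n → ℝ) → ℝ) (f : (Fin n → ℝ) → (Fin n → ℝ))
    (l : List RTree) (x : Fin n → ℝ) : Fin n → ℝ :=
  iteratedFDeriv ℝ l.length (grad H) x (fun j => elemDiff f (l.get j) x)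

section Analytic

variable {n : ℕ} {H : (Fin n → ℝ) → ℝ} {J : Matrix (Fin n) (Fin n) ℝ}
  {f : (Fin n → ℝ) → (Fin n → ℝ)}

/-- `J.mulVec` as a continuous linear map. -/
noncomputable def Jclm (J : Matrix (Fin n) (Fin n) ℝ) : (Fin n → ℝ) →L[ℝ] (Fin n → ℝ) :=
  LinearMap.toContinuousLinearMap (Matrix.mulVecLin J)

lemma Jclm_apply (J : Matrix (Fin n) (Fin n) ℝ) (v : Fin n → ℝ) :
    Jclm J v = J.mulVec v := by
  simp [Jclm]

lemma f_eq (hf : ∀ x, f x = J.mulVec (grad H x)) : f = ⇑(Jclm J) ∘ grad H := by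
  funext x
  rw [hf x, Function.comp_apply, Jclm_apply]

lemma f_contDiff (hH : ContDiff ℝ (⊤ : ℕ∞) H) (hf : ∀ x, f x = J.mulVec (grad H x)) :
    ContDiff ℝ (⊤ : ℕ∞) f := by
  rw [f_eq hf]
  exact (Jclm J).contDiff.comp (grad_contDiff hH)

lemma elemDiff_eq_mulVec (hH : ContDiff ℝ (⊤ : ℕ∞) H) (hf : ∀ x, f x = J.mulVec (grad H x))
    (l : List RTree) (x : Fin n → ℝ) :
    elemDiff f (.node l) x = J.mulVec (gvec H f l x) := by
  rw [elemDiff_node]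
  have h2 : iteratedFDeriv ℝ l.length f x = iteratedFDeriv ℝ l.length (⇑(Jclm J) ∘ grad H) x := by
    rw [← f_eq hf]
  have h := (Jclm J).iteratedFDeriv_comp_left (grad_contDiff hH).contDiffAt (x := x)
    (by exact_mod_cast le_top : ((l.length : ℕ) : WithTop ℕ∞) ≤ ((⊤ : ℕ∞) : WithTop ℕ∞))
  rw [h2, h]
  simp only [ContinuousLinearMap.compContinuousMultilinearMap_coe, Function.comp_apply]
  rw [Jclm_apply]
  rfl

lemma gvec_coord (hH : ContDiff ℝ (⊤ : ℕ∞) H) (l : List RTree) (x : Fin n → ℝ) (i : Fin n) :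
    gvec H f l x i =
      iteratedFDeriv ℝ l.length (fun y => fderiv ℝ H y) x
        (fun j => elemDiff f (l.get j) x) (Pi.single i 1) := by
  have e1 := (ContinuousLinearMap.proj (R := ℝ) (φ := fun _ : Fin n => ℝ) i).iteratedFDeriv_comp_left
    (grad_contDiff hH).contDiffAt (x := x) (by exact_mod_cast le_top : ((l.length : ℕ) : WithTop ℕ∞) ≤ ((⊤ : ℕ∞) : WithTop ℕ∞))
  have e3 := (ContinuousLinearMap.apply ℝ ℝ (Pi.single i (1 : ℝ))).iteratedFDeriv_comp_left
    (hH.fderiv_right (m := (⊤ : ℕ∞)) (by exact_mod_cast le_top)).contDiffAt (x := x) ((by exact_mod_cast le_top) : ((l.length : ℕ) : WithTop ℕ∞) ≤ ((⊤ : ℕ∞) : WithTop ℕ∞))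
  have e2 : (⇑(ContinuousLinearMap.proj (R := ℝ) (φ := fun _ : Fin n => ℝ) i)) ∘ grad H =
      ⇑(ContinuousLinearMap.apply ℝ ℝ (Pi.single i (1 : ℝ))) ∘ (fun y => fderiv ℝ H y) := rfl
  have := congrFun (congrArg (fun (T : ContinuousMultilinearMap ℝ
      (fun _ : Fin l.length => (Fin n → ℝ)) ℝ) => (T : (Fin l.length → (Fin n → ℝ)) → ℝ))
      ((e1.symm.trans (by rw [e2])).trans e3)) (fun j => elemDiff f (l.get j) x)
  simpa [gvec] using this

lemma elemHam_concat (hH : ContDiff ℝ (⊤ : ℕ∞) H) (l : List RTree) (t : RTree) (x : Fin n → ℝ) :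
    elemHam H f (.node (l ++ [t])) x = ∑ i, elemDiff f t x i * gvec H f l x i := by
  have hcast : l.length + 1 = (l ++ [t]).length := by simp
  rw [elemHam_node, itfd_cast hcast H x]
  have hsnoc : (fun i : Fin (l.length + 1) => elemDiff f ((l ++ [t]).get (Fin.cast hcast i)) x) =
      Fin.snoc (fun j : Fin l.length => elemDiff f (l.get j) x) (elemDiff f t x) := by
    funext i
    refine Fin.lastCases ?_ ?_ i
    · rw [Fin.snoc_last]
      refine congrArg (fun z => elemDiff f z x) ?_
      rw [List.get_eq_getElem]
      show (l ++ [t])[(l.length : ℕ)] = t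
      rw [List.getElem_append_right (le_refl l.length)]
      simp
    · intro j
      rw [Fin.snoc_castSucc]
      refine congrArg (fun z => elemDiff f z x) ?_
      rw [List.get_eq_getElem]
      show (l ++ [t])[(j : ℕ)] = l.get j
      rw [List.getElem_append_left (by simpa using j.isLt)]
      simp
  rw [hsnoc, iteratedFDeriv_succ_apply_right, Fin.init_snoc, Fin.snoc_last]
  have hw : (elemDiff f t x) = ∑ i, elemDiff f t x i • (Pi.single i (1 : ℝ) : Fin n → ℝ) := by
    funext j
    rw [Finset.sum_apply]
    simp [Pi.single_apply, eq_comm]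
  conv_lhs => rw [hw]
  rw [map_sum]
  refine Finset.sum_congr rfl fun i _ => ?_
  rw [map_smul, smul_eq_mul, gvec_coord hH l x i]

lemma elemHam_butcher_antisymm (hH : ContDiff ℝ (⊤ : ℕ∞) H) (hJ : J.transpose = -J)
    (hf : ∀ x, f x = J.mulVec (grad H x)) (a b : RTree) (x : Fin n → ℝ) :
    elemHam H f (butcher a b) x = - elemHam H f (butcher b a) x := by
  obtain ⟨la⟩ := a
  obtain ⟨lb⟩ := b
  rw [show butcher (.node la) (.node lb) = RTree.node (la ++ [.node lb]) from rfl,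
    show butcher (.node lb) (.node la) = RTree.node (lb ++ [.node la]) from rfl,
    elemHam_concat hH, elemHam_concat hH,
    elemDiff_eq_mulVec hH hf lb x, elemDiff_eq_mulVec hH hf la x]
  have hskew : ∀ i j, J j i = - J i j := by
    intro i j
    have := congrFun (congrFun hJ i) j
    simpa [Matrix.transpose_apply, Matrix.neg_apply] using this
  simp only [Matrix.mulVec, dotProduct, Finset.sum_mul]
  rw [← Finset.sum_neg_distrib, Finset.sum_comm]
  refine Finset.sum_congr rfl fun i _ => ?_
  rw [← Finset.sum_neg_distrib]
  refine Finset.sum_congr rfl fun j _ => ?_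
  rw [hskew j i]
  ring

end Analytic

/-- for smooth `H`, `J` skew-symmetric, `f = J∇H`, if the rooted trees
`u` and `v` have the same underlying graph and differ only in the position of the root —
witnessed by a chain of `κ` one-step root changes transforming `v` into `u` — then
`H(u)(x) = (-1)^κ H(v)(x)`. -/

theorem elemHam_root_change {n : ℕ} (H : (Fin n → ℝ) → ℝ)
    (J : Matrix (Fin n) (Fin n) ℝ) (hH : ContDiff ℝ (⊤ : ℕ∞) H) (hJ : J.transpose = -J)
    (f : (Fin n → ℝ) → (Fin n → ℝ)) (hf : ∀ x, f x = J.mulVec (grad H x))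
    (u v : RTree) (κ : ℕ) (c : ℕ → RTree)
    (h0 : c 0 = v) (hκ : c κ = u) (hstep : ∀ i < κ, RootStep (c i) (c (i + 1)))
    (x : Fin n → ℝ) :
    elemHam H f u x = (-1 : ℝ) ^ κ * elemHam H f v x := by
  have hfC : ContDiff ℝ (⊤ : ℕ∞) f := f_contDiff hH hf
  have key : ∀ k : ℕ, (∀ i < k, RootStep (c i) (c (i + 1))) →
      elemHam H f (c k) x = (-1 : ℝ) ^ k * elemHam H f (c 0) x := by
    intro k
    induction k with
    | zero => intro _; simp
    | succ k ih =>
      intro hs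
      obtain ⟨a, b, hab, hba⟩ := hs k (Nat.lt_succ_self k)
      have h1 : elemHam H f (c k) x = elemHam H f (butcher a b) x :=
        childRel_elemHam hH (teq_childRel hfC hab) x
      have h2 : elemHam H f (c (k + 1)) x = elemHam H f (butcher b a) x :=
        childRel_elemHam hH (teq_childRel hfC hba) x
      have h3 := elemHam_butcher_antisymm hH hJ hf b a x
      rw [h2, h3, ← h1, ih (fun i hi => hs i (Nat.lt_succ_of_lt hi))]
      ring
  have hk := key κ hstep
  rw [hκ, h0] at hk
  exact hk
end
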